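/- Let ν be a positive integer and ε > 0. Define g(z) = (z+1)^{ν+1} − (1+ε)z^{ν+1} for z > 0. Then g(z) ≤ (1+1/ε)^ν · ν^ν for all z > 0. -/

import Mathlib

/-!
Write `z + 1 = u · (z / u) + (1 - u) · (1 / (1 - u))` and apply convexity of `x ↦ x ^ (ν + 1)`:
`(z + 1) ^ (ν + 1) ≤ z ^ (ν + 1) / u ^ ν + 1 / (1 - u) ^ ν`. The choice `u = (1 + ε) ^ (-1/ν)`
makes the first term `(1 + ε) z ^ (ν + 1)`, and Bernoulli's inequality `1 - u ^ ν ≤ ν (1 - u)`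
bounds `1 / (1 - u)` by `ν (1 + 1/ε)`.
-/

lemma add_pow_succ_le_div_pow_add_div_pow {a b t : ℝ} (ha : 0 ≤ a) (hb : 0 ≤ b) (ht₀ : 0 < t)
    (ht₁ : t < 1) (n : ℕ) :
    (a + b) ^ (n + 1) ≤ a ^ (n + 1) / t ^ n + b ^ (n + 1) / (1 - t) ^ n := by
  have hs₀ : 0 < 1 - t := sub_pos.2 ht₁
  have hscale {c s : ℝ} (hs : 0 < s) : s * (c / s) ^ (n + 1) = c ^ (n + 1) / s ^ n := by
    rw [div_pow, pow_succ s]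
    field_simp
  have h := (convexOn_pow (n + 1)).2 (Set.mem_Ici.2 (div_nonneg ha ht₀.le))
    (Set.mem_Ici.2 (div_nonneg hb hs₀.le)) ht₀.le hs₀.le (add_sub_cancel t 1)
  simpa only [smul_eq_mul, mul_div_cancel₀ _ ht₀.ne', mul_div_cancel₀ _ hs₀.ne', hscale ht₀,
    hscale hs₀] using h

lemma inv_one_sub_le_of_pow_mul_one_add_eq_one {u ε : ℝ} (hu : -1 ≤ u) (hε : 0 < ε) {n : ℕ}
    (h : u ^ n * (1 + ε) = 1) : (1 - u)⁻¹ ≤ n * (1 + 1 / ε) := by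
  have hu₁ : u < 1 := by
    by_contra! hu₁
    nlinarith [one_le_pow₀ (n := n) hu₁]
  have hbernoulli := one_add_mul_sub_le_pow hu n
  rw [inv_le_iff_one_le_mul₀ (sub_pos.2 hu₁)]
  field_simp
  nlinarith

theorem g_bound (ν : ℕ) (hν : 0 < ν) (ε : ℝ) (hε : 0 < ε) (z : ℝ) (hz : 0 < z) :
    (z + 1) ^ (ν + 1) - (1 + ε) * z ^ (ν + 1) ≤ (1 + 1 / ε) ^ ν * (ν : ℝ) ^ ν := by
  set u := (1 + ε) ^ (-(ν : ℝ)⁻¹)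
  have hu₀ : 0 < u := by positivity
  have hu₁ : u < 1 := Real.rpow_lt_one_of_one_lt_of_neg (by linarith) (by simpa using hν)
  have hu_pow : u ^ ν * (1 + ε) = 1 := by
    rw [← Real.rpow_natCast, ← Real.rpow_mul (by positivity), neg_mul,
      inv_mul_cancel₀ (Nat.cast_pos.2 hν).ne', Real.rpow_neg_one, inv_mul_cancel₀ (by positivity)]
  have hsplit := add_pow_succ_le_div_pow_add_div_pow hz.le zero_le_one hu₀ hu₁ ν
  rw [div_eq_mul_inv, inv_eq_of_mul_eq_one_right hu_pow, one_pow, one_div, ← inv_pow] at hsplit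
  calc (z + 1) ^ (ν + 1) - (1 + ε) * z ^ (ν + 1) ≤ (1 - u)⁻¹ ^ ν := by linarith
    _ ≤ (ν * (1 + 1 / ε)) ^ ν := pow_le_pow_left₀ (inv_nonneg.2 (sub_pos.2 hu₁).le)
      (inv_one_sub_le_of_pow_mul_one_add_eq_one (by linarith) hε hu_pow) ν
    _ = (1 + 1 / ε) ^ ν * (ν : ℝ) ^ ν := by rw [mul_pow, mul_comm]
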